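/- arXiv:2509.21529 — 2 statements merged into one kernel-verified Lean document; each statement's English description precedes it below -/
import Mathlib

section
/- For all positive integers m and n, the minimum rank of the Hopi rectangle graph HD(m,n) satisfies mr(HD(m,n)) ≤ 2mn. -/
/-- `A` is a real symmetric matrix whose off-diagonal nonzero pattern is the
adjacency of `G` (diagonal entries are unconstrained). -/
def CompatMatrix {V : Type*} [Fintype V] (G : SimpleGraph V) (A : Matrix V V ℝ) : Prop :=
  A.IsSymm ∧ ∀ i j : V, i ≠ j → (A i j ≠ 0 ↔ G.Adj i j)

/-- The minimum rank `mr(G)` of a graph. -/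
noncomputable def minRank {V : Type*} [Fintype V] (G : SimpleGraph V) : ℕ :=
  sInf {r | ∃ A : Matrix V V ℝ, CompatMatrix G A ∧ A.rank = r}

/-- The maximum nullity `M(G)` of a graph, where the nullity of an `n × n`
matrix `A` is `n - rank A`. -/
noncomputable def maxNullity {V : Type*} [Fintype V] (G : SimpleGraph V) : ℕ :=
  sSup {k | ∃ A : Matrix V V ℝ, CompatMatrix G A ∧ Fintype.card V - A.rank = k}

/-- The vertex set of the Hopi rectangle graph of order `(m,n)`: the set of
integer lattice points `(i,j)` with `m-1 ≤ i+j ≤ 2n+m-1` and `|i-j| ≤ m`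
(realized as a `Finset` by filtering a sufficiently large box). -/
noncomputable def HDverts (m n : ℕ) : Finset (ℤ × ℤ) :=
  (Finset.Icc (-2 : ℤ) (2*n + 2*m) ×ˢ Finset.Icc (-2 : ℤ) (2*n + 2*m)).filter
    (fun p => (m : ℤ) - 1 ≤ p.1 + p.2 ∧ p.1 + p.2 ≤ 2*n + m - 1 ∧ |p.1 - p.2| ≤ m)

/-- The Hopi rectangle graph `HD(m,n)`: vertices are the points of `HDverts m n`,
and `(i,j)` is adjacent to `(i',j')` iff `|i - i'| + |j - j'| = 1`. -/
def HD (m n : ℕ) : SimpleGraph {p : ℤ × ℤ // p ∈ HDverts m n} where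
  Adj u v := |u.val.1 - v.val.1| + |u.val.2 - v.val.2| = 1
  symm := by
    constructor
    intro u v h
    rw [abs_sub_comm v.val.1 u.val.1, abs_sub_comm v.val.2 u.val.2]
    exact h
  loopless := by constructor; intro u h; simp at h

/-!
The vertices of `HD(m,n)` with `i + j - m` even are the `m + 1` points of each of `n`
antidiagonals, those with `i + j - m` odd are the `m` diagonals of `n + 1` points each.
A lattice point is adjacent to no point of a diagonal (or antidiagonal) line or to exactly
two consecutive ones, so the alternating sum of the adjacency rows along each of these
segments vanishes on the vertex set. Hence the last row of every segment is redundant, and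
the remaining `n(m+1) + (n+1)m - (n + m) = 2mn` rows span the row space of the adjacency
matrix, a matrix in `S(HD(m,n))`.
-/

open Finset Matrix

theorem compatMatrix_adjMatrix {V : Type*} [Fintype V] (G : SimpleGraph V) [DecidableRel G.Adj] :
    CompatMatrix G (G.adjMatrix ℝ) :=
  ⟨G.isSymm_adjMatrix, fun i j _ => by simp [SimpleGraph.adjMatrix_apply]⟩

theorem minRank_le_rank {V : Type*} [Fintype V] {G : SimpleGraph V} {A : Matrix V V ℝ}
    (hA : CompatMatrix G A) : minRank G ≤ A.rank :=
  Nat.sInf_le ⟨A, hA, rfl⟩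

theorem Matrix.rank_le_card_of_row_mem_span {K ι m n : Type*} [Field K] [Finite m] [Fintype n]
    [Fintype ι] (A : Matrix m n K) (g : ι → n → K) (h : ∀ i, A i ∈ Submodule.span K (Set.range g)) :
    A.rank ≤ Fintype.card ι := by
  rw [rank_eq_finrank_span_row]
  calc Module.finrank K (Submodule.span K (Set.range A.row))
      ≤ Module.finrank K (Submodule.span K (Set.range g)) :=
        Submodule.finrank_mono (Submodule.span_le.mpr (Set.range_subset_iff.mpr h))
    _ ≤ Fintype.card ι := finrank_range_le_card g

theorem Submodule.mem_of_sum_range_succ_smul_eq_zero {K M : Type*} [Field K] [AddCommGroup M]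
    [Module K M] (S : Submodule K M) {N : ℕ} {c : ℕ → K} {v : ℕ → M}
    (hsum : ∑ k ∈ range (N + 1), c k • v k = 0) (hc : c N ≠ 0) (hv : ∀ k < N, v k ∈ S) :
    v N ∈ S := by
  rw [sum_range_succ, add_comm, add_eq_zero_iff_eq_neg] at hsum
  have : c N • v N ∈ S := by
    rw [hsum]
    exact S.neg_mem (S.sum_mem fun k hk => S.smul_mem _ (hv k (mem_range.mp hk)))
  simpa [hc] using S.smul_mem (c N)⁻¹ this

theorem sum_range_neg_one_pow_mul_ite_eq_zero {N : ℕ} {P : ℕ → Prop} [DecidablePred P]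
    (h : (∀ k ≤ N, ¬P k) ∨ ∃ k₀ < N, ∀ k ≤ N, (P k ↔ k = k₀ ∨ k = k₀ + 1)) :
    ∑ k ∈ range (N + 1), (-1 : ℝ) ^ k * (if P k then 1 else 0) = 0 := by
  rcases h with hnone | ⟨k₀, hk₀, hP⟩
  · exact sum_eq_zero fun k hk => by simp [hnone k (Nat.lt_succ_iff.mp (mem_range.mp hk))]
  calc ∑ k ∈ range (N + 1), (-1 : ℝ) ^ k * (if P k then 1 else 0)
      = ∑ k ∈ range (N + 1), ((-1 : ℝ) ^ k * (if k = k₀ then 1 else 0)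
          + (-1 : ℝ) ^ k * (if k = k₀ + 1 then 1 else 0)) := by
        refine sum_congr rfl fun k hk => ?_
        simp only [hP k (Nat.lt_succ_iff.mp (mem_range.mp hk))]
        split_ifs <;> first | omega | ring
    _ = (-1 : ℝ) ^ k₀ + (-1) ^ (k₀ + 1) := by
        simp [sum_add_distrib, show k₀ < N + 1 by omega, show k₀ + 1 < N + 1 by omega]
    _ = 0 := by ring

def latticeAdjInd (v w : ℤ × ℤ) : ℝ := if |v.1 - w.1| + |v.2 - w.2| = 1 then 1 else 0

theorem sum_range_neg_one_pow_mul_latticeAdjInd_diag (a q : ℤ × ℤ) {e : ℤ} (he : e = 1 ∨ e = -1)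
    {N : ℕ} (h₀ : 0 ≤ q.1 - a.1 + e * (q.2 - a.2)) (hN : q.1 - a.1 + e * (q.2 - a.2) ≤ 2 * N) :
    ∑ k ∈ range (N + 1), (-1 : ℝ) ^ k * latticeAdjInd (a.1 + k, a.2 + e * k) q = 0 := by
  apply sum_range_neg_one_pow_mul_ite_eq_zero
  obtain ⟨a₁, a₂⟩ := a
  obtain ⟨x, y⟩ := q
  simp only [Int.abs_eq_natAbs]
  by_cases h₁ : x - a₁ - e * (y - a₂) = 1
  · refine Or.inr ⟨(x - a₁ - 1).toNat, ?_, fun k hk => ?_⟩ <;> rcases he with rfl | rfl <;> omega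
  by_cases h₂ : x - a₁ - e * (y - a₂) = -1
  · refine Or.inr ⟨(x - a₁).toNat, ?_, fun k hk => ?_⟩ <;> rcases he with rfl | rfl <;> omega
  refine Or.inl fun k hk => ?_
  rcases he with rfl | rfl <;> omega

section HopiRectangle

variable (m n : ℕ)

instance : DecidableRel (HD m n).Adj := fun _ _ => inferInstanceAs (Decidable (_ = _))

theorem mem_HDverts {p : ℤ × ℤ} :
    p ∈ HDverts m n ↔ (m : ℤ) - 1 ≤ p.1 + p.2 ∧ p.1 + p.2 ≤ 2 * n + m - 1 ∧
      -(m : ℤ) ≤ p.1 - p.2 ∧ p.1 - p.2 ≤ m := by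
  simp only [HDverts, mem_filter, mem_product, mem_Icc, abs_le]
  omega

def hdRow (v : ℤ × ℤ) : {p : ℤ × ℤ // p ∈ HDverts m n} → ℝ := fun q => latticeAdjInd v q.1

theorem adjMatrix_HD_apply (p : {p : ℤ × ℤ // p ∈ HDverts m n}) :
    (HD m n).adjMatrix ℝ p = hdRow m n p.1 :=
  rfl

def hdPtEven (t k : ℕ) : ℤ × ℤ := (t + k, t + m - k)

def hdPtOdd (t k : ℕ) : ℤ × ℤ := (t + k, t + m - 1 - k)

variable {m n}

theorem HDverts_cases {p : ℤ × ℤ} (hp : p ∈ HDverts m n) :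
    (∃ t < n, ∃ k ≤ m, p = hdPtEven m t k) ∨ (∃ t ≤ n, ∃ k < m, p = hdPtOdd m t k) := by
  obtain ⟨x, y⟩ := p
  rw [mem_HDverts] at hp
  simp only [hdPtEven, hdPtOdd, Prod.mk.injEq]
  rcases Int.even_or_odd (x + y - m) with ⟨c, hc⟩ | ⟨c, hc⟩
  · exact Or.inl ⟨c.toNat, by omega, (x - c).toNat, by omega, by omega, by omega⟩
  · exact Or.inr ⟨(c + 1).toNat, by omega, (x - c - 1).toNat, by omega, by omega, by omega⟩

theorem sum_hdRow_hdPtEven (t : ℕ) :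
    ∑ k ∈ range (m + 1), (-1 : ℝ) ^ k • hdRow m n (hdPtEven m t k) = 0 := by
  funext q
  have hq := (mem_HDverts m n).mp q.2
  simp only [Finset.sum_apply, Pi.smul_apply, smul_eq_mul, hdRow, Pi.zero_apply]
  convert sum_range_neg_one_pow_mul_latticeAdjInd_diag ((t : ℤ), (t : ℤ) + m) q.1
    (Or.inr rfl) (N := m) (by omega) (by omega) using 4
  simp only [hdPtEven]
  ring_nf

theorem sum_hdRow_hdPtOdd (k : ℕ) :
    ∑ t ∈ range (n + 1), (-1 : ℝ) ^ t • hdRow m n (hdPtOdd m t k) = 0 := by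
  funext q
  have hq := (mem_HDverts m n).mp q.2
  simp only [Finset.sum_apply, Pi.smul_apply, smul_eq_mul, hdRow, Pi.zero_apply]
  convert sum_range_neg_one_pow_mul_latticeAdjInd_diag ((k : ℤ), (m : ℤ) - 1 - k) q.1
    (Or.inl rfl) (N := n) (by omega) (by omega) using 4
  simp only [hdPtOdd]
  ring_nf

variable (m n)

def hdGen : Fin m × Fin n ⊕ Fin m × Fin n → {p : ℤ × ℤ // p ∈ HDverts m n} → ℝ :=
  Sum.elim (fun x => hdRow m n (hdPtEven m x.2 x.1)) (fun x => hdRow m n (hdPtOdd m x.2 x.1))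

variable {m n}

theorem hdRow_hdPtEven_mem_span {t k : ℕ} (ht : t < n) (hk : k ≤ m) :
    hdRow m n (hdPtEven m t k) ∈ Submodule.span ℝ (Set.range (hdGen m n)) := by
  have hgen : ∀ k < m, hdRow m n (hdPtEven m t k) ∈ Submodule.span ℝ (Set.range (hdGen m n)) :=
    fun k hk => Submodule.subset_span ⟨.inl (⟨k, hk⟩, ⟨t, ht⟩), rfl⟩
  rcases hk.lt_or_eq with hk | rfl
  · exact hgen k hk
  · exact Submodule.mem_of_sum_range_succ_smul_eq_zero _ (sum_hdRow_hdPtEven t) (by simp) hgen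

theorem hdRow_hdPtOdd_mem_span {t k : ℕ} (ht : t ≤ n) (hk : k < m) :
    hdRow m n (hdPtOdd m t k) ∈ Submodule.span ℝ (Set.range (hdGen m n)) := by
  have hgen : ∀ t < n, hdRow m n (hdPtOdd m t k) ∈ Submodule.span ℝ (Set.range (hdGen m n)) :=
    fun t ht => Submodule.subset_span ⟨.inr (⟨k, hk⟩, ⟨t, ht⟩), rfl⟩
  rcases ht.lt_or_eq with ht | rfl
  · exact hgen t ht
  · exact Submodule.mem_of_sum_range_succ_smul_eq_zero _ (sum_hdRow_hdPtOdd k) (by simp) hgen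

variable (m n)

theorem rank_adjMatrix_HD_le : ((HD m n).adjMatrix ℝ).rank ≤ 2 * m * n := by
  calc ((HD m n).adjMatrix ℝ).rank
      ≤ Fintype.card (Fin m × Fin n ⊕ Fin m × Fin n) :=
        rank_le_card_of_row_mem_span _ (hdGen m n) fun p => ?_
    _ = 2 * m * n := by simp only [Fintype.card_sum, Fintype.card_prod, Fintype.card_fin]; ring
  rw [adjMatrix_HD_apply]
  rcases HDverts_cases p.2 with ⟨t, ht, k, hk, hp⟩ | ⟨t, ht, k, hk, hp⟩ <;> rw [hp]
  · exact hdRow_hdPtEven_mem_span ht hk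
  · exact hdRow_hdPtOdd_mem_span ht hk

end HopiRectangle

theorem minRank_HD_le_general (m n : ℕ) :
    minRank (HD m n) ≤ 2 * m * n :=
  (minRank_le_rank (compatMatrix_adjMatrix _)).trans (rank_adjMatrix_HD_le m n)

/-- The minimum rank of `HD(m,n)` is at most `2mn`. -/
theorem minRank_HD_le (m n : ℕ) (hm : 0 < m) (hn : 0 < n) :
    minRank (HD m n) ≤ 2 * m * n :=
  minRank_HD_le_general m n
end

section
/- For all positive integers m and n, the 2-leaky forcing number of the Hopi rectangle graph HD(m,n) is at least 2(m + n), i.e., 2(m+n) ≤ Z_{(2)}(HD(m,n)). -/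
/-- One round of the zero forcing color change rule, where vertices in the
leak set `L` are not permitted to force. A blue vertex `u ∉ L` with exactly one
non-blue neighbor `v` turns `v` blue. -/
def zfStep {V : Type*} (G : SimpleGraph V) (L : Set V) (B : Set V) : Set V :=
  B ∪ {v | ∃ u ∈ B, u ∉ L ∧ G.Adj u v ∧ ∀ w, G.Adj u w → w ∉ B → w = v}

/-- The set of vertices eventually colored blue starting from `B`, with leaks `L`. -/
def zfClosure {V : Type*} (G : SimpleGraph V) (L : Set V) (B : Set V) : Set V :=
  ⋃ k, (zfStep G L)^[k] B

/-- `B` is an `ℓ`-leaky forcing set: for every leak set of size at most `ℓ`,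
starting with exactly `B` blue, eventually every vertex becomes blue. -/
def IsLeakyForcingSet {V : Type*} (G : SimpleGraph V) (ℓ : ℕ) (B : Set V) : Prop :=
  ∀ L : Set V, L.ncard ≤ ℓ → zfClosure G L B = Set.univ

/-- `B` is a zero forcing set (no leaks). -/
def IsZeroForcingSet {V : Type*} (G : SimpleGraph V) (B : Set V) : Prop :=
  zfClosure G (∅ : Set V) B = Set.univ

/-- The zero forcing number `Z(G)`: minimum cardinality of a zero forcing set. -/
noncomputable def zfNumber {V : Type*} (G : SimpleGraph V) : ℕ :=
  sInf (Set.ncard '' {B : Set V | IsZeroForcingSet G B})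

/-- The `ℓ`-leaky forcing number `Z_(ℓ)(G)`: minimum cardinality of an
`ℓ`-leaky forcing set. -/
noncomputable def leakyNumber {V : Type*} (G : SimpleGraph V) (ℓ : ℕ) : ℕ :=
  sInf (Set.ncard '' {B : Set V | IsLeakyForcingSet G ℓ B})

/-!
A vertex with at most two neighbors lies in every 2-leaky forcing set: if both of its
neighbors leak, nothing can ever force it. The `2(m + n)` lattice points on the four sides of
the Hopi rectangle are such vertices.
-/

section LeakyForcing

variable {V : Type*} {G : SimpleGraph V} {L B : Set V} {v : V}

theorem subset_zfClosure : B ⊆ zfClosure G L B :=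
  fun _ hv => Set.mem_iUnion.2 ⟨0, hv⟩

theorem isLeakyForcingSet_univ (G : SimpleGraph V) (ℓ : ℕ) : IsLeakyForcingSet G ℓ Set.univ :=
  fun _ _ => Set.eq_univ_of_univ_subset subset_zfClosure

theorem mem_of_mem_zfStep (hL : G.neighborSet v ⊆ L) (hv : v ∈ zfStep G L B) : v ∈ B := by
  rcases hv with hv | ⟨u, -, huL, huv, -⟩
  · exact hv
  · exact absurd (hL (G.adj_symm huv)) huL

theorem mem_of_mem_zfClosure (hL : G.neighborSet v ⊆ L) (hv : v ∈ zfClosure G L B) :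
    v ∈ B := by
  obtain ⟨k, hk⟩ := Set.mem_iUnion.1 hv
  induction k with
  | zero => exact hk
  | succ k ih =>
    rw [Function.iterate_succ_apply'] at hk
    exact ih (mem_of_mem_zfStep hL hk)

theorem IsLeakyForcingSet.mem_of_ncard_neighborSet_le {ℓ : ℕ} (hB : IsLeakyForcingSet G ℓ B)
    (hv : (G.neighborSet v).ncard ≤ ℓ) : v ∈ B :=
  mem_of_mem_zfClosure subset_rfl (by rw [hB _ hv]; trivial)

theorem ncard_le_leakyNumber_of_forall_ncard_neighborSet_le [Finite V] {ℓ : ℕ} {S : Set V}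
    (hS : ∀ v ∈ S, (G.neighborSet v).ncard ≤ ℓ) : S.ncard ≤ leakyNumber G ℓ := by
  refine le_csInf ⟨_, Set.univ, isLeakyForcingSet_univ G ℓ, rfl⟩ ?_
  rintro _ ⟨B, hB, rfl⟩
  exact Set.ncard_le_ncard fun v hv => hB.mem_of_ncard_neighborSet_le (hS v hv)

end LeakyForcing

open Finset

/-- The lattice points of `HD(m,n)` on the lines `i + j = m - 1`, `i + j = 2n + m - 1`,
`i - j = m` and `j - i = m`. -/
def hopiSides (m n : ℕ) : Finset (ℤ × ℤ) :=
  (range m).image (fun i : ℕ => ((i : ℤ), (m : ℤ) - 1 - i)) ∪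
    (range m).image (fun i : ℕ => ((n : ℤ) + i, (n : ℤ) + m - 1 - i)) ∪
    (range n).image (fun j : ℕ => ((j : ℤ) + m, (j : ℤ))) ∪
    (range n).image (fun j : ℕ => ((j : ℤ), (j : ℤ) + m))

theorem card_hopiSides {m n : ℕ} (hm : 0 < m) (hn : 0 < n) :
    (hopiSides m n).card = 2 * (m + n) := by
  rw [hopiSides, card_union_of_disjoint, card_union_of_disjoint, card_union_of_disjoint,
    card_image_of_injective, card_image_of_injective, card_image_of_injective,
    card_image_of_injective, card_range, card_range]
  · ring
  all_goals first
    | intro a b h; simp only [Prod.mk.injEq] at h; omega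
    | simp only [disjoint_left, mem_union, mem_image, mem_range]; grind

theorem hopiSides_subset_HDverts (m n : ℕ) : hopiSides m n ⊆ HDverts m n := by
  intro p hp
  simp only [hopiSides, mem_union, mem_image, mem_range] at hp
  simp only [HDverts, mem_filter, mem_product, mem_Icc, abs_le]
  rcases hp with ((⟨i, hi, rfl⟩ | ⟨i, hi, rfl⟩) | ⟨i, hi, rfl⟩) | ⟨i, hi, rfl⟩ <;> omega

/-- On each side two of the four lattice neighbors of a vertex lie outside `HD(m,n)`. -/
theorem ncard_neighborSet_HD_le_two {m n : ℕ} {v : {p // p ∈ HDverts m n}}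
    (hv : v.val ∈ hopiSides m n) : ((HD m n).neighborSet v).ncard ≤ 2 := by
  obtain ⟨a, b, hab⟩ : ∃ a b : ℤ × ℤ, ∀ w, (HD m n).Adj v w → w.val = a ∨ w.val = b := by
    simp only [hopiSides, mem_union, mem_image, mem_range] at hv
    rcases hv with ((⟨i, hi, hv⟩ | ⟨i, hi, hv⟩) | ⟨i, hi, hv⟩) | ⟨i, hi, hv⟩ <;> [
      refine ⟨(v.val.1 + 1, v.val.2), (v.val.1, v.val.2 + 1), ?_⟩;
      refine ⟨(v.val.1 - 1, v.val.2), (v.val.1, v.val.2 - 1), ?_⟩;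
      refine ⟨(v.val.1 - 1, v.val.2), (v.val.1, v.val.2 + 1), ?_⟩;
      refine ⟨(v.val.1 + 1, v.val.2), (v.val.1, v.val.2 - 1), ?_⟩]
    all_goals
      intro w (hvw : |v.val.1 - w.val.1| + |v.val.2 - w.val.2| = 1)
      have hw := w.2
      simp only [HDverts, mem_filter, mem_product, mem_Icc, abs_le] at hw
      simp only [Prod.ext_iff] at hv ⊢
      rcases abs_cases (v.val.1 - w.val.1) with h1 | h1 <;>
        rcases abs_cases (v.val.2 - w.val.2) with h2 | h2 <;> omega
  calc ((HD m n).neighborSet v).ncard ≤ ({a, b} : Set (ℤ × ℤ)).ncard :=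
        Set.ncard_le_ncard_of_injOn Subtype.val hab Subtype.val_injective.injOn (Set.toFinite _)
    _ ≤ 2 := (Set.ncard_insert_le a {b}).trans (by rw [Set.ncard_singleton])

/-- The `2`-leaky forcing number of `HD(m,n)` is at least `2(m + n)`. -/
theorem two_leaky_HD_ge (m n : ℕ) (hm : 0 < m) (hn : 0 < n) :
    2 * (m + n) ≤ leakyNumber (HD m n) 2 := by
  have hsides : (hopiSides m n : Set (ℤ × ℤ)) ⊆
      Set.range (Subtype.val : {p // p ∈ HDverts m n} → ℤ × ℤ) := by
    rw [Subtype.range_coe_subtype]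
    exact hopiSides_subset_HDverts m n
  calc 2 * (m + n) = (hopiSides m n).card := (card_hopiSides hm hn).symm
    _ = (Subtype.val ⁻¹' (hopiSides m n : Set (ℤ × ℤ))).ncard := by
      rw [Set.ncard_preimage_of_injective_subset_range Subtype.val_injective hsides,
        Set.ncard_coe_finset]
    _ ≤ leakyNumber (HD m n) 2 :=
      ncard_le_leakyNumber_of_forall_ncard_neighborSet_le fun _ => ncard_neighborSet_HD_le_two
end
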